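/- arXiv:2507.21605 — 5 statements merged into one kernel-verified Lean document; each statement's English description precedes it below -/
import Mathlib

section
/- For any λ_g ∈ (0,1), lim_{M→∞} Σ_{k=0}^∞ λ_g^{k/M} · (arccos(λ_g^{(k+1)/M}) − arccos(λ_g^{k/M})) = 1. -/
open Real Filter

private lemma sin_mvt {a b : ℝ} (h0 : 0 ≤ a) (hab : a ≤ b) (hb : b ≤ π) :
    Real.cos b * (b - a) ≤ Real.sin b - Real.sin a ∧
      Real.sin b - Real.sin a ≤ Real.cos a * (b - a) := by
  rcases eq_or_lt_of_le hab with rfl | h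
  · simp
  · obtain ⟨ξ, hξ, hd⟩ := exists_hasDerivAt_eq_slope Real.sin Real.cos h
      Real.continuous_sin.continuousOn (fun x _ => Real.hasDerivAt_sin x)
    have hslope : Real.sin b - Real.sin a = Real.cos ξ * (b - a) := by
      rw [hd]; exact (div_mul_cancel₀ (Real.sin b - Real.sin a) (sub_ne_zero.mpr h.ne')).symm
      
    have h1 : Real.cos b ≤ Real.cos ξ :=
      Real.cos_le_cos_of_nonneg_of_le_pi (h0.trans hξ.1.le) hb hξ.2.le
    have h2 : Real.cos ξ ≤ Real.cos a :=
      Real.cos_le_cos_of_nonneg_of_le_pi h0 (hξ.2.le.trans hb) hξ.1.le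
    constructor <;> nlinarith

private lemma arccos_antitone : Antitone Real.arccos := by
  intro x y hxy
  unfold Real.arccos
  have := Real.monotone_arcsin hxy
  linarith

private lemma key_bounds {c : ℝ} (hc0 : 0 < c) (hc1 : c < 1) :
    1 ≤ (∑' k : ℕ, c ^ k * (Real.arccos (c ^ (k + 1)) - Real.arccos (c ^ k))) ∧
      (∑' k : ℕ, c ^ k * (Real.arccos (c ^ (k + 1)) - Real.arccos (c ^ k))) ≤ 1 / c := by
  set θ : ℕ → ℝ := fun k => Real.arccos (c ^ k) with hθ
  set s : ℕ → ℝ := fun k => Real.sin (θ k) with hs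
  have hckpos : ∀ k : ℕ, 0 < c ^ k := fun k => pow_pos hc0 k
  have hckle : ∀ k : ℕ, c ^ k ≤ 1 := fun k => pow_le_one₀ hc0.le hc1.le
  have hdec : ∀ k : ℕ, c ^ (k + 1) ≤ c ^ k := fun k =>
    pow_le_pow_of_le_one hc0.le hc1.le (Nat.le_succ k)
  have hθ0 : ∀ k, 0 ≤ θ k := fun k => Real.arccos_nonneg _
  have hθπ : ∀ k, θ k ≤ π := fun k => Real.arccos_le_pi _
  have hθmono : ∀ k, θ k ≤ θ (k + 1) := fun k => arccos_antitone (hdec k)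
  have hcosθ : ∀ k, Real.cos (θ k) = c ^ k := fun k =>
    Real.cos_arccos (by linarith [hckpos k]) (hckle k)
  have hmvt := fun k => sin_mvt (hθ0 k) (hθmono k) (hθπ (k + 1))
  set f : ℕ → ℝ := fun k => c ^ k * (θ (k + 1) - θ k) with hf
  set g : ℕ → ℝ := fun k => s (k + 1) - s k with hg
  have hgf : ∀ k, g k ≤ f k := by
    intro k
    have := (hmvt k).2
    rw [hcosθ k] at this
    exact this
  have hfg : ∀ k, f k ≤ (1 / c) * g k := by
    intro k
    have h := (hmvt k).1
    rw [hcosθ (k + 1)] at h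
    have hΔ : 0 ≤ θ (k + 1) - θ k := by linarith [hθmono k]
    have : c * f k ≤ g k := by
      simp only [hf]
      calc c * (c ^ k * (θ (k + 1) - θ k)) = c ^ (k + 1) * (θ (k + 1) - θ k) := by ring
        _ ≤ g k := h
    rw [div_mul_eq_mul_div, le_div_iff₀ hc0]
    linarith
  have hs_eq : ∀ k, s k = Real.sqrt (1 - (c ^ k) ^ 2) := fun k => Real.sin_arccos _
  have hg0 : ∀ k, 0 ≤ g k := by
    intro k
    simp only [hg, sub_nonneg, hs_eq]
    apply Real.sqrt_le_sqrt
    nlinarith [hdec k, hckpos (k + 1)]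
  have hf0 : ∀ k, 0 ≤ f k := fun k => (hg0 k).trans (hgf k)
  have hrange : ∀ n, ∑ i ∈ Finset.range n, g i = s n - s 0 := fun n =>
    Finset.sum_range_sub s n
  have hs0 : s 0 = 0 := by simp [hs_eq]
  have hsumg : Summable g := by
    apply summable_of_sum_range_le (c := 1) hg0
    intro n
    rw [hrange n, hs0, sub_zero, hs_eq]
    exact Real.sqrt_le_one.mpr (by nlinarith [hckpos n])
  have htend : Tendsto (fun n => ∑ i ∈ Finset.range n, g i) atTop (nhds 1) := by
    simp only [hrange, hs0, sub_zero, hs_eq]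
    have hc : Tendsto (fun n : ℕ => c ^ n) atTop (nhds 0) :=
      tendsto_pow_atTop_nhds_zero_of_lt_one hc0.le hc1
    have hcont : Continuous (fun x : ℝ => Real.sqrt (1 - x ^ 2)) := by continuity
    have := (hcont.tendsto 0).comp hc
    simpa [Function.comp_def] using this
  have hgsum : ∑' k, g k = 1 :=
    tendsto_nhds_unique hsumg.hasSum.tendsto_sum_nat htend
  have hsumf : Summable f :=
    Summable.of_nonneg_of_le hf0 hfg (hsumg.mul_left (1 / c))
  constructor
  · rw [← hgsum]
    exact Summable.tsum_le_tsum hgf hsumg hsumf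
  · calc ∑' k, f k ≤ ∑' k, (1 / c) * g k :=
        Summable.tsum_le_tsum hfg hsumf (hsumg.mul_left (1 / c))
      _ = (1 / c) * ∑' k, g k := tsum_mul_left
      _ = 1 / c := by rw [hgsum, mul_one]

/-- For `λ_g ∈ (0,1)`,
`lim_{M→∞} Σ_{k=0}^∞ λ_g^{k/M} (arccos(λ_g^{(k+1)/M}) − arccos(λ_g^{k/M})) = 1`. -/
theorem stmt3 (lg : ℝ) (hlg : lg ∈ Set.Ioo (0 : ℝ) 1) :
    Tendsto (fun M : ℕ => ∑' k : ℕ,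
        lg ^ ((k : ℝ) / M) *
          (Real.arccos (lg ^ (((k : ℝ) + 1) / M)) - Real.arccos (lg ^ ((k : ℝ) / M))))
      atTop (nhds 1) := by
  obtain ⟨hlg0, hlg1⟩ := hlg
  have hrw : ∀ M : ℕ, 1 ≤ M → (∑' k : ℕ, lg ^ ((k : ℝ) / M) *
      (Real.arccos (lg ^ (((k : ℝ) + 1) / M)) - Real.arccos (lg ^ ((k : ℝ) / M))))
      = ∑' k : ℕ, (lg ^ ((1 : ℝ) / M)) ^ k *
        (Real.arccos ((lg ^ ((1 : ℝ) / M)) ^ (k + 1)) -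
          Real.arccos ((lg ^ ((1 : ℝ) / M)) ^ k)) := by
    intro M hM
    congr 1
    funext k
    have h1 : ∀ n : ℕ, (lg ^ ((1 : ℝ) / M)) ^ n = lg ^ ((n : ℝ) / M) := by
      intro n
      rw [← Real.rpow_natCast (lg ^ ((1 : ℝ) / M)) n, ← Real.rpow_mul hlg0.le]
      congr 1
      ring
    rw [h1 k, h1 (k + 1)]
    push_cast
    ring_nf
  have hc : ∀ M : ℕ, 1 ≤ M → 0 < lg ^ ((1 : ℝ) / M) ∧ lg ^ ((1 : ℝ) / M) < 1 := by
    intro M hM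
    have hMpos : (0 : ℝ) < M := by exact_mod_cast hM
    exact ⟨Real.rpow_pos_of_pos hlg0 _,
      Real.rpow_lt_one hlg0.le hlg1 (div_pos one_pos hMpos)⟩
  have hhi : Tendsto (fun M : ℕ => 1 / lg ^ ((1 : ℝ) / M)) atTop (nhds 1) := by
    have h1 : Tendsto (fun M : ℕ => lg ^ ((1 : ℝ) / M)) atTop (nhds 1) := by
      have := (Real.continuousAt_const_rpow (a := lg) (b := 0)
        hlg0.ne').tendsto.comp tendsto_one_div_atTop_nhds_zero_nat
      simpa [Function.comp_def, Real.rpow_zero] using this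
    simpa [one_div] using h1.inv₀ one_ne_zero
  apply tendsto_of_tendsto_of_tendsto_of_le_of_le' tendsto_const_nhds hhi
  · filter_upwards [eventually_ge_atTop 1] with M hM
    rw [hrw M hM]
    exact (key_bounds (hc M hM).1 (hc M hM).2).1
  · filter_upwards [eventually_ge_atTop 1] with M hM
    rw [hrw M hM]
    exact (key_bounds (hc M hM).1 (hc M hM).2).2
end

section
/- The function f(x) = arccos(λ_g^x) on (0,∞) is increasing and concave, for any fixed λ_g ∈ (0,1). -/
open Real

lemma aux_hasDerivAt (x : ℝ) (hx : x ∈ Set.Ioo (0 : ℝ) 1) :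
    HasDerivAt (fun y : ℝ => -(1 / Real.sqrt (1 - y ^ 2)))
      (-(x / (Real.sqrt (1 - x ^ 2) * (1 - x ^ 2)))) x := by
  have hx2 : (0 : ℝ) < 1 - x ^ 2 := by nlinarith [hx.1, hx.2]
  have hs : (0 : ℝ) < Real.sqrt (1 - x ^ 2) := Real.sqrt_pos.2 hx2
  have h1 : HasDerivAt (fun y : ℝ => 1 - y ^ 2) (-(2 * x)) x := by
    simpa using ((hasDerivAt_pow 2 x).const_sub 1)
  have hsq : HasDerivAt (fun y : ℝ => Real.sqrt (1 - y ^ 2))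
      (1 / (2 * Real.sqrt (1 - x ^ 2)) * (-(2 * x))) x :=
    (Real.hasDerivAt_sqrt hx2.ne').comp x h1
  have hdiv : HasDerivAt (fun y : ℝ => 1 / Real.sqrt (1 - y ^ 2))
      ((0 * Real.sqrt (1 - x ^ 2) - 1 * (1 / (2 * Real.sqrt (1 - x ^ 2)) * (-(2 * x)))) /
        (Real.sqrt (1 - x ^ 2)) ^ 2) x :=
    (hasDerivAt_const x (1 : ℝ)).div hsq hs.ne'
  have := hdiv.neg
  refine this.congr_deriv ?_
  have hsqne : Real.sqrt (1 - x ^ 2) ≠ 0 := hs.ne'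
  have hsq2 : Real.sqrt (1 - x ^ 2) ^ 2 = 1 - x ^ 2 := Real.sq_sqrt hx2.le
  rw [hsq2]
  field_simp
  ring

lemma aux_concave_arccos : ConcaveOn ℝ (Set.Icc (0 : ℝ) 1) Real.arccos := by
  have hint : interior (Set.Icc (0 : ℝ) 1) = Set.Ioo (0 : ℝ) 1 := interior_Icc
  apply concaveOn_of_deriv2_nonpos (convex_Icc 0 1)
    Real.continuous_arccos.continuousOn
  · rw [hint]
    intro x hx
    exact (Real.differentiableAt_arccos.2 ⟨by linarith [hx.1], by linarith [hx.2]⟩).differentiableWithinAt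
  · rw [hint]
    intro x hx
    rw [Real.deriv_arccos]
    exact (aux_hasDerivAt x hx).differentiableAt.differentiableWithinAt
  · rw [hint]
    intro x hx
    have hx2 : (0 : ℝ) < 1 - x ^ 2 := by nlinarith [hx.1, hx.2]
    have hs : (0 : ℝ) < Real.sqrt (1 - x ^ 2) := Real.sqrt_pos.2 hx2
    have : deriv^[2] Real.arccos x = -(x / (Real.sqrt (1 - x ^ 2) * (1 - x ^ 2))) := by
      simp only [Function.iterate_succ, Function.iterate_zero, Function.comp_apply, id_eq]
      rw [Real.deriv_arccos]
      exact (aux_hasDerivAt x hx).deriv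
    rw [this]
    have : 0 ≤ x / (Real.sqrt (1 - x ^ 2) * (1 - x ^ 2)) :=
      div_nonneg hx.1.le (by positivity)
    linarith

/-- For fixed `λ_g ∈ (0,1)`, the function `x ↦ arccos(λ_g^x)` is (strictly)
increasing and concave on `(0,∞)`. -/
theorem stmt4 (lg : ℝ) (hlg : lg ∈ Set.Ioo (0 : ℝ) 1) :
    StrictMonoOn (fun x : ℝ => Real.arccos (lg ^ x)) (Set.Ioi 0) ∧
      ConcaveOn ℝ (Set.Ioi 0) (fun x : ℝ => Real.arccos (lg ^ x)) := by
  obtain ⟨hlg0, hlg1⟩ := hlg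
  have hmem : ∀ x : ℝ, 0 < x → lg ^ x ∈ Set.Icc (0 : ℝ) 1 := fun x hx =>
    ⟨(Real.rpow_pos_of_pos hlg0 x).le, Real.rpow_le_one hlg0.le hlg1.le hx.le⟩
  constructor
  · intro x hx y hy hxy
    have hlt : lg ^ y < lg ^ x := Real.rpow_lt_rpow_of_exponent_gt hlg0 hlg1 hxy
    have h1 : lg ^ y ∈ Set.Icc (-1 : ℝ) 1 :=
      ⟨by linarith [(hmem y hy).1], (hmem y hy).2⟩
    have h2 : lg ^ x ∈ Set.Icc (-1 : ℝ) 1 :=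
      ⟨by linarith [(hmem x hx).1], (hmem x hx).2⟩
    exact Real.strictAntiOn_arccos h1 h2 hlt
  · refine ⟨convex_Ioi 0, ?_⟩
    intro x hx y hy a b ha hb hab
    simp only [smul_eq_mul] at *
    have hx' : (0 : ℝ) < x := hx
    have hy' : (0 : ℝ) < y := hy
    have hxy : (0 : ℝ) < a * x + b * y := by
      rcases eq_or_lt_of_le ha with h | h
      · have hb1 : b = 1 := by linarith
        simpa [← h, hb1] using hy'
      · nlinarith
    -- convexity of rpow in the exponent
    have hgconv : lg ^ (a * x + b * y) ≤ a * lg ^ x + b * lg ^ y := by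
      have hx1 : lg ^ x = Real.exp (x * Real.log lg) := by rw [Real.rpow_def_of_pos hlg0 x, mul_comm]
      have hy1 : lg ^ y = Real.exp (y * Real.log lg) := by rw [Real.rpow_def_of_pos hlg0 y, mul_comm]
      have hxy1 : lg ^ (a * x + b * y) = Real.exp ((a * x + b * y) * Real.log lg) := by
        rw [Real.rpow_def_of_pos hlg0, mul_comm]
      have := convexOn_exp.2 (Set.mem_univ (x * Real.log lg)) (Set.mem_univ (y * Real.log lg))
        ha hb hab
      simp only [smul_eq_mul] at this
      rw [hx1, hy1, hxy1]
      calc Real.exp ((a * x + b * y) * Real.log lg)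
          = Real.exp (a * (x * Real.log lg) + b * (y * Real.log lg)) := by ring_nf
        _ ≤ a * Real.exp (x * Real.log lg) + b * Real.exp (y * Real.log lg) := this
    -- arccos antitone
    have hcomb_mem : a * lg ^ x + b * lg ^ y ∈ Set.Icc (0 : ℝ) 1 := by
      constructor
      · have := (hmem x hx').1; have := (hmem y hy').1
        nlinarith
      · have := (hmem x hx').2; have := (hmem y hy').2
        nlinarith
    have hanti : Real.arccos (a * lg ^ x + b * lg ^ y) ≤ Real.arccos (lg ^ (a * x + b * y)) :=
      Real.strictAntiOn_arccos.antitoneOn ⟨by linarith [(hmem _ hxy).1], by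
        rcases hcomb_mem with ⟨h1,h2⟩; linarith [(hmem _ hxy).2]⟩
        ⟨by linarith [hcomb_mem.1], hcomb_mem.2⟩ hgconv
    have hconc := aux_concave_arccos.2 (hmem x hx') (hmem y hy') ha hb hab
    simp only [smul_eq_mul] at hconc
    linarith
end

section
/- Let W = [λ_min, λ_max] ⊂ (0,1) and let (λ_k) be i.i.d. uniform on W with λ_g = exp(E[log λ_1]). If λ_g < 1/2 then the random set Λ_ω = { Σ_{j≥1} a_j ∏_{k=1}^j λ_k : a_j ∈ {0,1} } has Lebesgue measure zero almost surely. -/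
open MeasureTheory ProbabilityTheory Real Filter
open scoped ENNReal Topology

lemma aux_choice (lmin lmax : ℝ) (h0 : 0 < lmin) (h1 : lmin < lmax) (h2 : lmax < 1)
    (hlog : Real.log 2 * (lmax - lmin) +
      (lmax * Real.log lmax - lmin * Real.log lmin - (lmax - lmin)) < 0) :
    ∃ t : ℝ, 0 < t ∧
      (2:ℝ) ^ t * ((lmax ^ (t+1) - lmin ^ (t+1)) / ((t+1) * (lmax - lmin))) < 1 := by
  have hL : (0:ℝ) < lmax - lmin := by linarith
  have hmax0 : (0:ℝ) < lmax := h0.trans h1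
  set F : ℝ → ℝ := fun t => (2:ℝ) ^ t * ((lmax ^ (t+1) - lmin ^ (t+1)) / ((t+1) * (lmax - lmin)))
    with hFdef
  have hF0 : F 0 = 1 := by
    simp only [hFdef, Real.rpow_zero, zero_add, Real.rpow_one, one_mul]
    exact div_self hL.ne'
  have h2t : HasDerivAt (fun t : ℝ => (2:ℝ) ^ t) (Real.log 2) 0 := by
    have := (Real.hasStrictDerivAt_const_rpow (by norm_num : (0:ℝ) < 2) 0).hasDerivAt
    simpa using this
  have hmax : HasDerivAt (fun t : ℝ => lmax ^ (t+1)) (lmax * Real.log lmax) 0 := by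
    have h := ((Real.hasStrictDerivAt_const_rpow hmax0 (0+1)).hasDerivAt).comp 0
      ((hasDerivAt_id (0:ℝ)).add_const 1)
    simpa [Real.rpow_one, Function.comp_def] using h
  have hmin : HasDerivAt (fun t : ℝ => lmin ^ (t+1)) (lmin * Real.log lmin) 0 := by
    have h := ((Real.hasStrictDerivAt_const_rpow h0 (0+1)).hasDerivAt).comp 0
      ((hasDerivAt_id (0:ℝ)).add_const 1)
    simpa [Real.rpow_one, Function.comp_def] using h
  have hN : HasDerivAt (fun t : ℝ => lmax ^ (t+1) - lmin ^ (t+1))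
      (lmax * Real.log lmax - lmin * Real.log lmin) 0 := hmax.sub hmin
  have hDen : HasDerivAt (fun t : ℝ => (t+1) * (lmax - lmin)) (lmax - lmin) 0 := by
    simpa using ((hasDerivAt_id (0:ℝ)).add_const 1).mul_const (lmax - lmin)
  have hQ := hN.div hDen (by simpa using hL.ne')
  have hF : HasDerivAt F
      ((Real.log 2 * (lmax - lmin) +
        (lmax * Real.log lmax - lmin * Real.log lmin - (lmax - lmin))) / (lmax - lmin)) 0 := by
    have h := h2t.mul hQ
    refine HasDerivAt.congr_deriv h ?_
    simp only [zero_add, Real.rpow_one, Real.rpow_zero, one_mul, Pi.div_apply]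
    field_simp
  have hD : ((Real.log 2 * (lmax - lmin) +
        (lmax * Real.log lmax - lmin * Real.log lmin - (lmax - lmin))) / (lmax - lmin)) < 0 :=
    div_neg_of_neg_of_pos hlog hL
  have hslope := hasDerivAt_iff_tendsto_slope.mp hF
  have hslope' : Filter.Tendsto (slope F 0) (nhdsWithin 0 (Set.Ioi 0)) (nhds _) :=
    hslope.mono_left (nhdsWithin_mono 0 (fun x hx => ne_of_gt hx))
  have hev : ∀ᶠ t in nhdsWithin (0:ℝ) (Set.Ioi 0), slope F 0 t < 0 :=
    hslope'.eventually_lt_const hD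
  obtain ⟨t, hts, htmem⟩ := (hev.and (eventually_mem_nhdsWithin)).exists
  refine ⟨t, htmem, ?_⟩
  have ht0 : (0:ℝ) < t := htmem
  rw [slope_def_field, hF0] at hts
  have hFt : F t < 1 := by
    rcases div_neg_iff.mp hts with ⟨hnum, hden⟩ | ⟨hnum, hden⟩
    · linarith
    · linarith
  exact hFt

lemma aux_cover (lmin lmax : ℝ) (h0 : 0 < lmin) (h1 : lmin < lmax) (h2 : lmax < 1)
    (ω : ℕ → ℝ) (hW : ∀ k, ω k ∈ Set.Icc lmin lmax) (n : ℕ) :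
    volume {x : ℝ | ∃ a : ℕ → Bool,
      x = ∑' j : ℕ, if a j then ∏ k ∈ Finset.range (j + 1), ω k else 0}
      ≤ ENNReal.ofReal ((1 - lmax)⁻¹ * (2 ^ n * ∏ k ∈ Finset.range n, ω k)) := by
  have hωpos : ∀ k, 0 < ω k := fun k => h0.trans_le (hW k).1
  have hωle : ∀ k, ω k ≤ lmax := fun k => (hW k).2
  have hlmax0 : 0 < lmax := h0.trans h1
  set p : ℕ → ℝ := fun j => ∏ k ∈ Finset.range (j + 1), ω k with hp
  have hp_pos : ∀ j, 0 < p j := fun j => Finset.prod_pos (fun k _ => hωpos k)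
  have hp_le : ∀ j, p j ≤ lmax ^ (j + 1) := by
    intro j
    calc p j ≤ ∏ k ∈ Finset.range (j+1), lmax :=
          Finset.prod_le_prod (fun k _ => (hωpos k).le) (fun k _ => hωle k)
    _ = lmax ^ (j+1) := by simp
  have hgeo : Summable (fun j : ℕ => lmax ^ (j + 1)) := by
    simpa [pow_succ'] using (summable_geometric_of_lt_one hlmax0.le h2).mul_left lmax
  have hsum_p : Summable p :=
    Summable.of_nonneg_of_le (fun j => (hp_pos j).le) hp_le hgeo
  set q : ℝ := ∏ k ∈ Finset.range n, ω k with hq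
  have hq_pos : 0 < q := Finset.prod_pos (fun k _ => hωpos k)
  set T : ℝ := (1 - lmax)⁻¹ * q with hT
  have h1max : 0 < 1 - lmax := by linarith
  -- the finite family of intervals
  set H : (Fin n → Bool) → ℝ := fun b => ∑ j : Fin n, if b j then p (j : ℕ) else 0 with hH
  have hsubset : {x : ℝ | ∃ a : ℕ → Bool,
      x = ∑' j : ℕ, if a j then ∏ k ∈ Finset.range (j + 1), ω k else 0}
      ⊆ ⋃ b : Fin n → Bool, Set.Icc (H b) (H b + T) := by
    rintro x ⟨a, rfl⟩
    have hsa : Summable (fun j => if a j then p j else 0) := by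
      apply Summable.of_nonneg_of_le _ _ hsum_p
      · intro j; split <;> simp [hp_pos j, le_of_lt]
      · intro j; split <;> simp [hp_pos j, le_of_lt]
    refine Set.mem_iUnion.mpr ⟨fun j => a (j : ℕ), ?_⟩
    have hsplit := Summable.sum_add_tsum_nat_add n hsa
    have hhead : ∑ j ∈ Finset.range n, (if a j then p j else 0)
        = H (fun j : Fin n => a (j : ℕ)) := by
      rw [hH]
      exact (Fin.sum_univ_eq_sum_range (fun j => if a j then p j else 0) n).symm
    have htail_sum : Summable (fun j => if a (j + n) then p (j + n) else 0) :=
      (summable_nat_add_iff (f := fun j => if a j then p j else 0) n).2 hsa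
    have htail_nonneg : 0 ≤ ∑' j : ℕ, (if a (j + n) then p (j + n) else 0) :=
      tsum_nonneg (fun j => by split <;> simp [hp_pos, le_of_lt])
    have hgeo' : Summable (fun j : ℕ => q * lmax ^ (j + 1)) := hgeo.mul_left q
    have htail_le : (∑' j : ℕ, (if a (j + n) then p (j + n) else 0)) ≤ T := by
      have hb1 : ∀ j : ℕ, (if a (j + n) then p (j + n) else 0) ≤ p (j + n) := by
        intro j; split <;> simp [hp_pos, le_of_lt]
      have hb2 : ∀ j : ℕ, p (j + n) ≤ q * lmax ^ (j + 1) := by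
        intro j
        have : p (j + n) = q * ∏ i ∈ Finset.range (j + 1), ω (n + i) := by
          simp only [hp, hq]
          rw [show j + n + 1 = n + (j + 1) by omega, Finset.prod_range_add]
        rw [this]
        refine mul_le_mul_of_nonneg_left ?_ hq_pos.le
        calc ∏ i ∈ Finset.range (j+1), ω (n+i) ≤ ∏ i ∈ Finset.range (j+1), lmax :=
              Finset.prod_le_prod (fun k _ => (hωpos _).le) (fun k _ => hωle _)
        _ = lmax ^ (j+1) := by simp
      have := Summable.tsum_le_tsum (fun j => (hb1 j).trans (hb2 j)) htail_sum hgeo'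
      refine this.trans ?_
      have : (∑' j : ℕ, q * lmax ^ (j + 1)) = q * (lmax * (1 - lmax)⁻¹) := by
        rw [tsum_mul_left]
        congr 1
        rw [show (fun j : ℕ => lmax ^ (j+1)) = fun j : ℕ => lmax * lmax ^ j by
          funext j; rw [pow_succ']]
        rw [tsum_mul_left, tsum_geometric_of_lt_one hlmax0.le h2]
      rw [this, hT]
      rw [mul_comm ((1-lmax)⁻¹) q]
      have hle1 : lmax * (1 - lmax)⁻¹ ≤ (1 - lmax)⁻¹ := by
        nlinarith [inv_pos.mpr h1max]
      exact mul_le_mul_of_nonneg_left hle1 hq_pos.le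
    constructor
    · rw [← hsplit, hhead]
      linarith [htail_nonneg]
    · rw [← hsplit, hhead]
      linarith [htail_le]
  calc volume {x : ℝ | ∃ a : ℕ → Bool,
      x = ∑' j : ℕ, if a j then ∏ k ∈ Finset.range (j + 1), ω k else 0}
      ≤ volume (⋃ b : Fin n → Bool, Set.Icc (H b) (H b + T)) := measure_mono hsubset
    _ ≤ ∑' b : Fin n → Bool, volume (Set.Icc (H b) (H b + T)) := measure_iUnion_le _
    _ = ∑' b : Fin n → Bool, ENNReal.ofReal T := by
        congr 1; funext b; rw [Real.volume_Icc, add_sub_cancel_left]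
    _ = ((2 ^ n : ℕ) : ℝ≥0∞) * ENNReal.ofReal T := by
        rw [tsum_fintype, Finset.sum_const, Finset.card_univ, nsmul_eq_mul]
        norm_num
    _ = ENNReal.ofReal ((1 - lmax)⁻¹ * (2 ^ n * q)) := by
        have e1 : ((1:ℝ) - lmax)⁻¹ * ((2:ℝ) ^ n * q) = (2:ℝ)^n * ((1 - lmax)⁻¹ * q) := by ring
        rw [e1, ENNReal.ofReal_mul (by positivity : (0:ℝ) ≤ 2^n)]
        have e2 : ENNReal.ofReal ((2:ℝ)^n) = ((2^n : ℕ) : ℝ≥0∞) := by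
          rw [ENNReal.ofReal_pow (by norm_num : (0:ℝ) ≤ 2)]
          push_cast
          norm_num
        rw [e2, hT]

/-- Let `W = [λ_min, λ_max] ⊂ (0,1)` and let `(λ_k)` be i.i.d. uniform on `W`
(encoded: `P` is a probability measure on `W^ℕ = (ℕ → ℝ)` with independent
coordinates, each uniformly distributed on `W`), and let
`λ_g = exp(E[log λ_1])`. If `λ_g < 1/2`, then the random self-similar set
`Λ_ω = {Σ_j a_j ∏_{k=1}^j λ_k : a_j ∈ {0,1}}` has Lebesgue measure zero
almost surely. -/
theorem stmt6 (lmin lmax : ℝ) (h0 : 0 < lmin) (h1 : lmin < lmax) (h2 : lmax < 1)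
    (P : Measure (ℕ → ℝ)) [IsProbabilityMeasure P]
    (hind : iIndepFun (fun k ω => ω k) P)
    (hmarg : ∀ k : ℕ, P.map (fun ω => ω k)
      = (ENNReal.ofReal (lmax - lmin))⁻¹ • volume.restrict (Set.Icc lmin lmax))
    (hlg : Real.exp ((∫ x in Set.Icc lmin lmax, Real.log x) / (lmax - lmin))
      < 1 / 2) :
    ∀ᵐ ω ∂P, volume {x : ℝ | ∃ a : ℕ → Bool,
      x = ∑' j : ℕ, if a j then ∏ k ∈ Finset.range (j + 1), ω k else 0} = 0 := by
  have hL : (0:ℝ) < lmax - lmin := by linarith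
  -- translate hlg into the hypothesis of aux_choice
  have hlogint : (∫ x in Set.Icc lmin lmax, Real.log x)
      = lmax * Real.log lmax - lmin * Real.log lmin - lmax + lmin := by
    rw [MeasureTheory.integral_Icc_eq_integral_Ioc, ← intervalIntegral.integral_of_le h1.le,
      integral_log]
  have hlog : Real.log 2 * (lmax - lmin) +
      (lmax * Real.log lmax - lmin * Real.log lmin - (lmax - lmin)) < 0 := by
    have h' : (∫ x in Set.Icc lmin lmax, Real.log x) / (lmax - lmin) < Real.log (1/2) := by
      rw [← Real.exp_lt_exp]
      exact hlg.trans_le (le_of_eq (Real.exp_log (by norm_num)).symm)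
    rw [hlogint, one_div, Real.log_inv] at h'
    have := (div_lt_iff₀ hL).mp h'
    linarith
  obtain ⟨t, ht, hFt⟩ := aux_choice lmin lmax h0 h1 h2 hlog
  -- marginal computation
  have hgm : Measurable (fun x : ℝ => ENNReal.ofReal (x ^ t)) := by fun_prop
  have hIccInt : IntegrableOn (fun x : ℝ => x ^ t) (Set.Icc lmin lmax) := by
    apply ContinuousOn.integrableOn_Icc
    exact ContinuousOn.rpow_const continuousOn_id
      (fun x hx => Or.inl (ne_of_gt (h0.trans_le hx.1)))
  have hnn : 0 ≤ᵐ[volume.restrict (Set.Icc lmin lmax)] fun x : ℝ => x ^ t := by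
    filter_upwards [ae_restrict_mem measurableSet_Icc] with x hx
    exact Real.rpow_nonneg (h0.trans_le hx.1).le t
  have hIccval : ∫ x in Set.Icc lmin lmax, x ^ t
      = (lmax ^ (t+1) - lmin ^ (t+1)) / (t+1) := by
    rw [MeasureTheory.integral_Icc_eq_integral_Ioc, ← intervalIntegral.integral_of_le h1.le,
      integral_rpow (Or.inl (by linarith : (-1:ℝ) < t))]
  set c : ℝ≥0∞ :=
    ENNReal.ofReal ((lmax - lmin)⁻¹ * ((lmax ^ (t+1) - lmin ^ (t+1)) / (t+1))) with hcdef
  have hco : ∀ k : ℕ, (∫⁻ ω, ENNReal.ofReal ((ω k) ^ t) ∂P) = c := by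
    intro k
    rw [← lintegral_map hgm (measurable_pi_apply k), hmarg k, lintegral_smul_measure,
      ← ofReal_integral_eq_lintegral_ofReal hIccInt hnn, hIccval, hcdef, smul_eq_mul,
      ← ENNReal.ofReal_inv_of_pos hL, ← ENNReal.ofReal_mul (by positivity)]
  -- independence
  have hmeasf : ∀ k : ℕ, Measurable (fun ω' : ℕ → ℝ => ENNReal.ofReal ((ω' k) ^ t)) :=
    fun k => hgm.comp (measurable_pi_apply k)
  have hiid : iIndepFun (fun k (ω' : ℕ → ℝ) => ENNReal.ofReal ((ω' k) ^ t)) P :=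
    hind.comp (fun _ x => ENNReal.ofReal (x ^ t)) (fun _ => hgm)
  have hprod : ∀ n : ℕ,
      ∫⁻ ω', ∏ k ∈ Finset.range n, ENNReal.ofReal ((ω' k) ^ t) ∂P = c ^ n := by
    intro n
    induction n with
    | zero => simp only [Finset.prod_range_zero, lintegral_one, measure_univ, pow_zero]
    | succ n ih =>
      have hip : IndepFun
          (fun ω' : ℕ → ℝ => ∏ k ∈ Finset.range n, ENNReal.ofReal ((ω' k) ^ t))
          (fun ω' : ℕ → ℝ => ENNReal.ofReal ((ω' n) ^ t)) P := by
        have h := hiid.indepFun_prod_range_succ hmeasf n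
        have he : (∏ j ∈ Finset.range n,
            (fun k (ω' : ℕ → ℝ) => ENNReal.ofReal ((ω' k) ^ t)) j)
            = fun ω' : ℕ → ℝ => ∏ k ∈ Finset.range n, ENNReal.ofReal ((ω' k) ^ t) :=
          funext fun ω' => Finset.prod_apply ω' (Finset.range n) _
        rwa [he] at h
      have hpm : Measurable
          (fun ω' : ℕ → ℝ => ∏ k ∈ Finset.range n, ENNReal.ofReal ((ω' k) ^ t)) :=
        Finset.measurable_prod _ (fun k _ => hmeasf k)
      simp_rw [Finset.prod_range_succ]
      rw [lintegral_mul_eq_lintegral_mul_lintegral_of_indepFun'' hpm.aemeasurable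
        (hmeasf n).aemeasurable hip, ih, hco n, pow_succ]
  -- geometric ratio
  set ρ : ℝ≥0∞ := ENNReal.ofReal ((2:ℝ) ^ t) * c with hρdef
  have hρ1 : ρ < 1 := by
    rw [hρdef, hcdef, ← ENNReal.ofReal_mul (Real.rpow_nonneg (by norm_num) t)]
    refine ENNReal.ofReal_lt_one.mpr ?_
    have : (2:ℝ) ^ t * ((lmax - lmin)⁻¹ * ((lmax ^ (t+1) - lmin ^ (t+1)) / (t+1)))
        = (2:ℝ) ^ t * ((lmax ^ (t+1) - lmin ^ (t+1)) / ((t+1) * (lmax - lmin))) := by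
      rw [inv_mul_eq_div, div_div]
    rw [this]; exact hFt
  have hXm : ∀ n : ℕ, Measurable (fun ω' : ℕ → ℝ =>
      (ENNReal.ofReal ((2:ℝ) ^ t)) ^ n * ∏ k ∈ Finset.range n, ENNReal.ofReal ((ω' k) ^ t)) :=
    fun n => (Finset.measurable_prod _ (fun k _ => hmeasf k)).const_mul _
  have hints : ∫⁻ ω', ∑' n : ℕ,
      (ENNReal.ofReal ((2:ℝ) ^ t)) ^ n * ∏ k ∈ Finset.range n, ENNReal.ofReal ((ω' k) ^ t) ∂P
      = ∑' n : ℕ, ρ ^ n := by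
    rw [lintegral_tsum (fun n => (hXm n).aemeasurable)]
    refine tsum_congr fun n => ?_
    rw [lintegral_const_mul _ (Finset.measurable_prod _ (fun k _ => hmeasf k)), hprod n,
      hρdef, mul_pow]
  have hfin : (∑' n : ℕ, ρ ^ n) ≠ ⊤ := by
    rw [ENNReal.tsum_geometric]
    refine ENNReal.inv_ne_top.mpr (fun h => hρ1.not_ge (tsub_eq_zero_iff_le.mp h))
  have hae1 : ∀ᵐ ω' ∂P, (∑' n : ℕ,
      (ENNReal.ofReal ((2:ℝ) ^ t)) ^ n * ∏ k ∈ Finset.range n, ENNReal.ofReal ((ω' k) ^ t))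
      < ⊤ := by
    apply ae_lt_top (Measurable.ennreal_tsum hXm)
    rw [hints]; exact hfin
  have hae2 : ∀ᵐ ω' ∂P, ∀ k : ℕ, ω' k ∈ Set.Icc lmin lmax := by
    rw [ae_all_iff]
    intro k
    have hnull : P ((fun ω' : ℕ → ℝ => ω' k) ⁻¹' (Set.Icc lmin lmax)ᶜ) = 0 := by
      rw [← Measure.map_apply (measurable_pi_apply k) measurableSet_Icc.compl, hmarg k]
      simp [Measure.restrict_apply measurableSet_Icc.compl, Set.compl_inter_self]
    rw [ae_iff]
    exact hnull
  filter_upwards [hae1, hae2] with ω hs hIcc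
  have hωpos : ∀ k, 0 < ω k := fun k => h0.trans_le (hIcc k).1
  set u : ℕ → ℝ := fun n => 2 ^ n * ∏ k ∈ Finset.range n, ω k with hu
  have hun : ∀ n, 0 ≤ u n :=
    fun n => mul_nonneg (by positivity) (Finset.prod_nonneg fun k _ => (hωpos k).le)
  have hXeq : ∀ n : ℕ,
      (ENNReal.ofReal ((2:ℝ) ^ t)) ^ n * ∏ k ∈ Finset.range n, ENNReal.ofReal ((ω k) ^ t)
      = ENNReal.ofReal ((u n) ^ t) := by
    intro n
    have h2n : (((2:ℝ) ^ n : ℝ)) ^ t = ((2:ℝ) ^ t) ^ n := by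
      rw [← Real.rpow_natCast (2:ℝ) n, ← Real.rpow_natCast ((2:ℝ) ^ t) n,
        ← Real.rpow_mul (by norm_num : (0:ℝ) ≤ 2),
        ← Real.rpow_mul (by norm_num : (0:ℝ) ≤ 2), mul_comm]
    rw [hu]
    rw [Real.mul_rpow (by positivity) (Finset.prod_nonneg fun k _ => (hωpos k).le), h2n,
      ← Real.finset_prod_rpow _ _ (fun k _ => (hωpos k).le) t,
      ENNReal.ofReal_mul (by positivity),
      ENNReal.ofReal_pow (Real.rpow_nonneg (by norm_num) t),
      ENNReal.ofReal_prod_of_nonneg (fun k _ => Real.rpow_nonneg (hωpos k).le t)]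
  have htend : Tendsto (fun n => ENNReal.ofReal ((u n) ^ t)) atTop (𝓝 0) := by
    have h0' := ENNReal.tendsto_atTop_zero_of_tsum_ne_top hs.ne
    exact h0'.congr hXeq
  have hv : Tendsto (fun n => (u n) ^ t) atTop (𝓝 0) := by
    have h' : Tendsto (fun n => (ENNReal.ofReal ((u n) ^ t)).toReal) atTop
        (𝓝 ((0:ℝ≥0∞)).toReal) := (ENNReal.tendsto_toReal ENNReal.zero_ne_top).comp htend
    simp only [ENNReal.toReal_zero] at h'
    exact h'.congr (fun n => ENNReal.toReal_ofReal (Real.rpow_nonneg (hun n) t))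
  have hu0 : Tendsto u atTop (𝓝 0) := by
    have hc : ContinuousAt (fun x : ℝ => x ^ t⁻¹) 0 :=
      Real.continuousAt_rpow_const 0 t⁻¹ (Or.inr (by positivity))
    have h' := hc.tendsto.comp hv
    rw [Real.zero_rpow (by positivity : t⁻¹ ≠ 0)] at h'
    refine h'.congr (fun n => ?_)
    simp only [Function.comp_apply]
    rw [← Real.rpow_mul (hun n), mul_inv_cancel₀ ht.ne', Real.rpow_one]
  have hb : ∀ n : ℕ, volume {x : ℝ | ∃ a : ℕ → Bool,
      x = ∑' j : ℕ, if a j then ∏ k ∈ Finset.range (j + 1), ω k else 0}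
      ≤ ENNReal.ofReal ((1 - lmax)⁻¹ * u n) :=
    fun n => aux_cover lmin lmax h0 h1 h2 ω hIcc n
  have hbt : Tendsto (fun n => ENNReal.ofReal ((1 - lmax)⁻¹ * u n)) atTop (𝓝 0) := by
    have h' := hu0.const_mul ((1 - lmax)⁻¹)
    rw [mul_zero] at h'
    have h'' := (ENNReal.continuous_ofReal.tendsto 0).comp h'
    simpa [Function.comp_def] using h''
  exact le_antisymm (ge_of_tendsto' hbt hb) (by positivity)
end

section
/- Suppose μ is a Borel probability measure on ℝ whose Fourier transform satisfies |μ̂(ξ)| = |μ̂(−ξ)| for all ξ, is Lipschitz with constant H, and satisfies |μ̂(ξ_{i,l})| ≤ ξ_{i,l}^{−ρ} for a family of points ξ_{i,l} that is η_i-dense in I_i = [λ_g^{-i}, λ_g^{-i-1}) for all i > K, where H·η_i < λ_g^{i}. Then there exist C > 0 and ρ' = min{ρ,1} such that |μ̂(ξ)| ≤ C|ξ|^{−ρ'} for all ξ ≠ 0. -/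
open MeasureTheory Real

/-- If the Fourier transform `F` of a Borel probability measure `μ` on ℝ has even
modulus, is `H`-Lipschitz, and satisfies `|F(ζ)| ≤ ζ^{−ρ}` on finite sets
`S i ⊆ I_i = [λ_g^{-i}, λ_g^{-i-1})` that are `η_i`-dense in `I_i` for all
`i > K`, where `H η_i < λ_g^i`, then `|F(ξ)| ≤ C |ξ|^{−ρ'}` for all `ξ ≠ 0`,
with `ρ' = min{ρ, 1}`. -/
theorem stmt14 (lg ρ H : ℝ) (hlg : lg ∈ Set.Ioo (0 : ℝ) 1) (hρ : 0 < ρ)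
    (hH : 0 < H) (K : ℕ) (μ : Measure ℝ) [IsProbabilityMeasure μ] (F : ℝ → ℂ)
    (hF : F = fun ξ : ℝ =>
      ∫ x : ℝ, Complex.exp (((-2 * π * ξ * x : ℝ) : ℂ) * Complex.I) ∂μ)
    (heven : ∀ ξ : ℝ, ‖F ξ‖ = ‖F (-ξ)‖)
    (hLip : ∀ ξ ξ' : ℝ, ‖F ξ - F ξ'‖ ≤ H * |ξ - ξ'|)
    (S : ℕ → Finset ℝ) (η : ℕ → ℝ)
    (hSsub : ∀ i : ℕ, ∀ ζ ∈ S i,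
      ζ ∈ Set.Ico (lg ^ (-(i : ℤ))) (lg ^ (-(i : ℤ) - 1)))
    (hdense : ∀ i : ℕ, K < i →
      ∀ ξ ∈ Set.Ico (lg ^ (-(i : ℤ))) (lg ^ (-(i : ℤ) - 1)),
        ∃ ζ ∈ S i, |ξ - ζ| ≤ η i)
    (hη : ∀ i : ℕ, K < i → 0 < η i ∧ H * η i < lg ^ i)
    (hdecay : ∀ i : ℕ, K < i → ∀ ζ ∈ S i, ‖F ζ‖ ≤ ζ ^ (-ρ)) :
    ∃ C : ℝ, 0 < C ∧ ∀ ξ : ℝ, ξ ≠ 0 →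
      ‖F ξ‖ ≤ C * |ξ| ^ (-(min ρ 1)) := by
  obtain ⟨hlg0, hlg1⟩ := hlg
  set ρ' : ℝ := min ρ 1 with hρ'def
  have hρ'0 : 0 < ρ' := lt_min hρ one_pos
  have hρ'1 : ρ' ≤ 1 := min_le_right _ _
  have hρ'ρ : ρ' ≤ ρ := min_le_left _ _
  set b : ℝ := lg⁻¹ with hbdef
  have hb1 : 1 < b := one_lt_inv_iff₀.2 ⟨hlg0, hlg1⟩
  have hb0 : 0 < b := lt_trans one_pos hb1
  set M : ℝ := b ^ (K + 1) with hMdef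
  have hM1 : 1 ≤ M := one_le_pow₀ hb1.le
  have hM0 : 0 < M := lt_of_lt_of_le one_pos hM1
  -- |F ξ| ≤ 1
  have hF1 : ∀ ξ : ℝ, ‖F ξ‖ ≤ 1 := by
    intro ξ
    rw [hF]
    have : ‖∫ x : ℝ, Complex.exp (((-2 * π * ξ * x : ℝ) : ℂ) * Complex.I) ∂μ‖
        ≤ 1 * (μ Set.univ).toReal := by
      apply norm_integral_le_of_norm_le_const
      filter_upwards with x
      rw [Complex.norm_exp]
      simp
    simpa using this
  -- zpow / pow conversion
  have hzpow : ∀ n : ℕ, lg ^ (-(n : ℤ)) = b ^ n := by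
    intro n
    rw [zpow_neg, zpow_natCast, hbdef, inv_pow]
  have hzpow' : ∀ n : ℕ, lg ^ (-(n : ℤ) - 1) = b ^ (n + 1) := by
    intro n
    have : (-(n : ℤ) - 1) = -((n + 1 : ℕ) : ℤ) := by push_cast; ring
    rw [this, hzpow]
  -- main claim for positive ξ
  set C : ℝ := max (2 * b) (M ^ ρ') with hCdef
  have hC0 : 0 < C := lt_of_lt_of_le (by positivity) (le_max_left _ _)
  have key : ∀ x : ℝ, 0 < x → ‖F x‖ ≤ C * x ^ (-ρ') := by
    intro x hx
    rcases le_or_gt x M with hxM | hxM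
    · -- small case
      have h1 : M ^ (-ρ') ≤ x ^ (-ρ') :=
        Real.rpow_le_rpow_of_nonpos hx hxM (neg_nonpos.2 hρ'0.le)
      have h2 : (1 : ℝ) ≤ M ^ ρ' * x ^ (-ρ') := by
        calc (1 : ℝ) = M ^ ρ' * M ^ (-ρ') := by
              rw [← Real.rpow_add hM0]; simp
          _ ≤ M ^ ρ' * x ^ (-ρ') := by
              apply mul_le_mul_of_nonneg_left h1 (Real.rpow_nonneg hM0.le _)
      calc ‖F x‖ ≤ 1 := hF1 x
        _ ≤ M ^ ρ' * x ^ (-ρ') := h2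
        _ ≤ C * x ^ (-ρ') := by
            apply mul_le_mul_of_nonneg_right (le_max_right _ _)
              (Real.rpow_nonneg hx.le _)
    · -- large case
      have hx1 : 1 ≤ x := le_trans hM1 hxM.le
      obtain ⟨n, hn1, hn2⟩ := exists_nat_pow_near hx1 hb1
      have hKn : K < n := by
        by_contra h
        push_neg at h
        have : x < M := lt_of_lt_of_le hn2 (pow_le_pow_right₀ hb1.le (by omega))
        exact absurd hxM (not_lt.2 this.le)
      have hxI : x ∈ Set.Ico (lg ^ (-(n : ℤ))) (lg ^ (-(n : ℤ) - 1)) := by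
        rw [hzpow, hzpow']; exact ⟨hn1, hn2⟩
      obtain ⟨ζ, hζS, hζd⟩ := hdense n hKn x hxI
      obtain ⟨hζ1, hζ2⟩ := hSsub n ζ hζS
      rw [hzpow] at hζ1
      have hζ0 : 0 < ζ := lt_of_lt_of_le (by positivity) hζ1
      obtain ⟨hη0, hηb⟩ := hη n hKn
      -- triangle
      have htri : ‖F x‖ ≤ ‖F ζ‖ + H * η n := by
        have : ‖F x‖ ≤ ‖F ζ‖ + ‖F x - F ζ‖ := by
          calc ‖F x‖ = ‖F ζ + (F x - F ζ)‖ := by ring_nf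
            _ ≤ _ := norm_add_le _ _
        refine this.trans (add_le_add_right ?_ _)
        exact (hLip x ζ).trans (mul_le_mul_of_nonneg_left hζd hH.le)
      -- bound the two pieces by b ^ (-(n * ρ'))
      have hbn : (b : ℝ) ^ n = b ^ (n : ℝ) := (Real.rpow_natCast b n).symm
      have hpiece1 : ‖F ζ‖ ≤ b ^ (-((n : ℝ) * ρ')) := by
        refine (hdecay n hKn ζ hζS).trans ?_
        have h1 : ζ ^ (-ρ) ≤ (b ^ (n : ℝ)) ^ (-ρ) := by
          apply Real.rpow_le_rpow_of_nonpos (by positivity) (hbn ▸ hζ1)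
            (neg_nonpos.2 hρ.le)
        refine h1.trans ?_
        rw [← Real.rpow_mul hb0.le]
        rw [Real.rpow_le_rpow_left_iff hb1]
        have hn0 : (0 : ℝ) ≤ (n : ℝ) := Nat.cast_nonneg n
        nlinarith [mul_le_mul_of_nonneg_left hρ'ρ hn0]
      have hpiece2 : H * η n ≤ b ^ (-((n : ℝ) * ρ')) := by
        have hlgb : lg ^ n = b ^ (-(n : ℝ)) := by
          rw [Real.rpow_neg hb0.le, ← hbn, hbdef, inv_pow, inv_inv]
        refine le_trans hηb.le ?_
        rw [hlgb, Real.rpow_le_rpow_left_iff hb1]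
        have hn0 : (0 : ℝ) ≤ (n : ℝ) := Nat.cast_nonneg n
        nlinarith [mul_le_mul_of_nonneg_left hρ'1 hn0]
      -- compare b ^ (-(n ρ')) to x ^ (-ρ')
      have hcomp : b ^ (-((n : ℝ) * ρ')) ≤ b * x ^ (-ρ') := by
        have h1 : x ^ (-ρ') ≥ (b ^ ((n : ℝ) + 1)) ^ (-ρ') := by
          apply Real.rpow_le_rpow_of_nonpos hx ?_ (neg_nonpos.2 hρ'0.le)
          rw [show ((n : ℝ) + 1) = ((n + 1 : ℕ) : ℝ) by push_cast; ring,
            Real.rpow_natCast]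
          exact hn2.le
        have h2 : (b ^ ((n : ℝ) + 1)) ^ (-ρ') = b ^ (-(((n : ℝ) + 1) * ρ')) := by
          rw [← Real.rpow_mul hb0.le]; ring_nf
        have h3 : b ^ (-((n : ℝ) * ρ')) = b ^ ρ' * b ^ (-(((n : ℝ) + 1) * ρ')) := by
          rw [← Real.rpow_add hb0]; ring_nf
        rw [h3]
        have h4 : b ^ ρ' ≤ b := by
          calc b ^ ρ' ≤ b ^ (1 : ℝ) := by
                rw [Real.rpow_le_rpow_left_iff hb1]; exact hρ'1
            _ = b := Real.rpow_one b
        calc b ^ ρ' * b ^ (-(((n : ℝ) + 1) * ρ'))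
            ≤ b * b ^ (-(((n : ℝ) + 1) * ρ')) :=
              mul_le_mul_of_nonneg_right h4 (Real.rpow_nonneg hb0.le _)
          _ ≤ b * x ^ (-ρ') := by
              apply mul_le_mul_of_nonneg_left (h2 ▸ h1) hb0.le
      calc ‖F x‖ ≤ ‖F ζ‖ + H * η n := htri
        _ ≤ b ^ (-((n : ℝ) * ρ')) + b ^ (-((n : ℝ) * ρ')) :=
            add_le_add hpiece1 hpiece2
        _ = 2 * b ^ (-((n : ℝ) * ρ')) := by ring
        _ ≤ 2 * (b * x ^ (-ρ')) := by
            apply mul_le_mul_of_nonneg_left hcomp (by norm_num)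
        _ = (2 * b) * x ^ (-ρ') := by ring
        _ ≤ C * x ^ (-ρ') :=
            mul_le_mul_of_nonneg_right (le_max_left _ _) (Real.rpow_nonneg hx.le _)
  refine ⟨C, hC0, fun ξ hξ => ?_⟩
  rcases lt_or_gt_of_ne hξ with h | h
  · have : ‖F ξ‖ = ‖F (-ξ)‖ := heven ξ
    rw [this, abs_of_neg h]
    exact key (-ξ) (by linarith)
  · rw [abs_of_pos h]
    exact key ξ h
end

section
/- Let λ_g ∈ (2/π, 1). Then there exist ε > 0 and a positive integer M such that for all n ∈ ℕ and all sufficiently large i (with E_i = ⌊(1−ε)i⌋ > n), the quantity (Σ_{k=0}^∞ λ_g^{k/M} (arccos(λ_g^{(k+1)/M}) − arccos(λ_g^{k/M}))) / (λ_g^{i/(E_i − n)} · π/2) is strictly less than 1. -/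
open Real

lemma aux_sin_sub (a b : ℝ) (ha : 0 ≤ a) (hab : a ≤ b) (hb : b ≤ π) :
    Real.cos b * (b - a) ≤ Real.sin b - Real.sin a := by
  have hmono : MonotoneOn (fun x => Real.sin x - Real.cos b * x) (Set.Icc a b) := by
    apply monotoneOn_of_deriv_nonneg (convex_Icc a b) (by fun_prop)
    · intro x hx
      exact ((Real.hasDerivAt_sin x).sub
        ((hasDerivAt_id x).const_mul (Real.cos b))).differentiableAt.differentiableWithinAt
    · intro x hx
      rw [interior_Icc] at hx
      have hd : deriv (fun x => Real.sin x - Real.cos b * x) x = Real.cos x - Real.cos b := by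
        have := ((Real.hasDerivAt_sin x).sub
          ((hasDerivAt_id x).const_mul (Real.cos b))).deriv
        simpa [mul_comm] using this
      rw [hd]
      have hcc : Real.cos b ≤ Real.cos x :=
        Real.cos_le_cos_of_nonneg_of_le_pi (ha.trans hx.1.le) hb hx.2.le
      linarith
  have h := hmono (Set.left_mem_Icc.2 hab) (Set.right_mem_Icc.2 hab) hab
  simp only at h
  nlinarith [h]


set_option maxHeartbeats 1000000 in
/-- For `λ_g ∈ (2/π, 1)` there exist `ε > 0` and a positive integer `M` such
that for all `n` and all sufficiently large `i` (with `E_i = ⌊(1−ε)i⌋ > n`),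
`(Σ_{k=0}^∞ λ_g^{k/M}(arccos(λ_g^{(k+1)/M}) − arccos(λ_g^{k/M})))
  / (λ_g^{i/(E_i−n)} π/2) < 1`. -/
theorem stmt17 (lg : ℝ) (hlg : lg ∈ Set.Ioo (2 / π) 1) :
    ∃ ε : ℝ, 0 < ε ∧ ∃ M : ℕ, 0 < M ∧ ∀ n : ℕ, ∃ I₀ : ℕ, ∀ i : ℕ, I₀ ≤ i →
      n < ⌊(1 - ε) * (i : ℝ)⌋₊ ∧
      (∑' k : ℕ, lg ^ ((k : ℝ) / M) *
          (Real.arccos (lg ^ (((k : ℝ) + 1) / M)) -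
            Real.arccos (lg ^ ((k : ℝ) / M)))) /
        (lg ^ ((i : ℝ) / ((⌊(1 - ε) * (i : ℝ)⌋₊ : ℝ) - (n : ℝ))) * (π / 2)) < 1 := by
  obtain ⟨h1, h2⟩ := hlg
  have hπ : 0 < π := Real.pi_pos
  have h2π : 0 < 2 / π := by positivity
  have hlg0 : 0 < lg := h2π.trans h1
  have hloglg : Real.log lg < 0 := Real.log_neg hlg0 h2
  set α : ℝ := Real.log (2 / π) / Real.log lg with hαdef
  have hlogs : Real.log (2 / π) < Real.log lg := Real.log_lt_log h2π h1
  have hα1 : 1 < α := by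
    rw [hαdef, lt_div_iff_of_neg hloglg]
    linarith
  set γ : ℝ := (α - 1) / 4 with hγdef
  have hγ : 0 < γ := by rw [hγdef]; linarith
  refine ⟨γ / (1 + γ), by positivity, ⌈1/γ⌉₊, Nat.ceil_pos.2 (by positivity), ?_⟩
  set M : ℕ := ⌈1/γ⌉₊ with hMdef
  have hM0 : (0:ℝ) < M := by exact_mod_cast Nat.ceil_pos.2 (by positivity : (0:ℝ) < 1/γ)
  have h1M : 1 / (M:ℝ) ≤ γ := by
    rw [div_le_iff₀ hM0]
    have := Nat.le_ceil (1/γ)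
    calc (1:ℝ) = γ * (1/γ) := by field_simp
    _ ≤ γ * M := by exact mul_le_mul_of_nonneg_left this hγ.le
  have h1ε : 1 - γ / (1 + γ) = 1 / (1 + γ) := by field_simp; ring
  -- the series bound: S ≤ lg ^ (-(1/M))
  have hx : ∀ j : ℕ, 0 < lg ^ ((j:ℝ)/M) ∧ lg ^ ((j:ℝ)/M) ≤ 1 := by
    intro j
    refine ⟨Real.rpow_pos_of_pos hlg0 _, Real.rpow_le_one hlg0.le h2.le (by positivity)⟩
  have hθ : ∀ j : ℕ, 0 ≤ Real.arccos (lg ^ ((j:ℝ)/M)) ∧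
      Real.arccos (lg ^ ((j:ℝ)/M)) ≤ π / 2 := by
    intro j
    exact ⟨Real.arccos_nonneg _, Real.arccos_le_pi_div_two.2 (hx j).1.le⟩
  have hθmono : ∀ j : ℕ, Real.arccos (lg ^ ((j:ℝ)/M)) ≤ Real.arccos (lg ^ (((j:ℝ)+1)/M)) := by
    intro j
    have hle : lg ^ (((j:ℝ)+1)/M) ≤ lg ^ ((j:ℝ)/M) :=
      Real.rpow_le_rpow_of_exponent_ge hlg0 h2.le
        (by gcongr <;> linarith)
    simp only [Real.arccos_eq_pi_div_two_sub_arcsin]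
    have := Real.monotone_arcsin hle
    linarith
  set f : ℕ → ℝ := fun k => lg ^ ((k:ℝ)/M) *
      (Real.arccos (lg ^ (((k:ℝ)+1)/M)) - Real.arccos (lg ^ ((k:ℝ)/M))) with hfdef
  set g : ℕ → ℝ := fun k => Real.sin (Real.arccos (lg ^ ((k:ℝ)/M))) with hgdef
  have hfnonneg : ∀ k, 0 ≤ f k := fun k =>
    mul_nonneg (hx k).1.le (sub_nonneg.2 (hθmono k))
  have hC0 : (0:ℝ) < lg ^ (-(1/(M:ℝ))) := Real.rpow_pos_of_pos hlg0 _
  have hterm : ∀ k : ℕ, f k ≤ lg ^ (-(1/(M:ℝ))) * (g (k+1) - g k) := by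
    intro k
    have hcast : (((k+1 : ℕ)):ℝ) = (k:ℝ)+1 := by push_cast; ring
    have hxk1 := hx (k+1)
    rw [hcast] at hxk1
    have hθk := hθ k
    have hθk1 := hθ (k+1)
    rw [hcast] at hθk1
    have hkey := aux_sin_sub (Real.arccos (lg ^ ((k:ℝ)/M)))
      (Real.arccos (lg ^ (((k:ℝ)+1)/M))) (hθk.1) (hθmono k)
      (le_trans hθk1.2 (by linarith))
    rw [Real.cos_arccos (by linarith [hxk1.1]) hxk1.2] at hkey
    have hsplit : lg ^ ((k:ℝ)/M) = lg ^ (-(1/(M:ℝ))) * lg ^ (((k:ℝ)+1)/M) := by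
      rw [← Real.rpow_add hlg0]
      congr 1
      field_simp; ring
    have hgk1 : g (k+1) = Real.sin (Real.arccos (lg ^ (((k:ℝ)+1)/M))) := by
      rw [hgdef]; simp only; rw [hcast]
    simp only [hfdef, hgdef]
    rw [hcast]
    have h2' : lg ^ (-(1/(M:ℝ))) * (lg ^ (((k:ℝ)+1)/M) *
        (Real.arccos (lg ^ (((k:ℝ)+1)/M)) - Real.arccos (lg ^ ((k:ℝ)/M)))) =
        lg ^ ((k:ℝ)/M) *
        (Real.arccos (lg ^ (((k:ℝ)+1)/M)) - Real.arccos (lg ^ ((k:ℝ)/M))) := by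
      rw [← mul_assoc, ← Real.rpow_add hlg0]
      congr 2
      field_simp; ring
    rw [← h2']
    exact mul_le_mul_of_nonneg_left hkey hC0.le
  have hsum : ∀ s : Finset ℕ, ∑ k ∈ s, f k ≤ lg ^ (-(1/(M:ℝ))) := by
    intro s
    have hsub : s ⊆ Finset.range (s.sup id + 1) := fun k hk =>
      Finset.mem_range.2 (Nat.lt_succ_of_le (Finset.le_sup (f := id) hk))
    have hg0 : ∀ k, 0 ≤ g k := fun k =>
      Real.sin_nonneg_of_nonneg_of_le_pi (hθ k).1 (le_trans (hθ k).2 (by linarith))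
    calc ∑ k ∈ s, f k ≤ ∑ k ∈ Finset.range (s.sup id + 1), f k :=
          Finset.sum_le_sum_of_subset_of_nonneg hsub (fun k _ _ => hfnonneg k)
      _ ≤ ∑ k ∈ Finset.range (s.sup id + 1), lg ^ (-(1/(M:ℝ))) * (g (k+1) - g k) :=
          Finset.sum_le_sum (fun k _ => hterm k)
      _ = lg ^ (-(1/(M:ℝ))) * (g (s.sup id + 1) - g 0) := by
          rw [← Finset.mul_sum, Finset.sum_range_sub]
      _ ≤ lg ^ (-(1/(M:ℝ))) * 1 := by
          have h1 : g (s.sup id + 1) ≤ 1 := Real.sin_le_one _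
          have h2 := hg0 0
          apply mul_le_mul_of_nonneg_left _ hC0.le
          linarith
      _ = lg ^ (-(1/(M:ℝ))) := mul_one _
  have hS : (∑' k, f k) ≤ lg ^ (-(1/(M:ℝ))) := tsum_le_of_sum_le' hC0.le hsum
  -- now the pointwise part
  intro n
  refine ⟨⌈(1+(n:ℝ))*(1+γ)*(1+2*γ)/γ⌉₊ + 1, fun i hi => ?_⟩
  have hi1 : (1:ℝ) ≤ (i:ℝ) := by
    exact_mod_cast le_trans (Nat.le_add_left 1 _) hi
  have hiR : (1+(n:ℝ))*(1+γ)*(1+2*γ)/γ ≤ (i:ℝ) := by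
    refine le_trans (Nat.le_ceil _) ?_
    exact_mod_cast le_trans (Nat.le_add_right _ 1) hi
  set E := ⌊(1 - γ/(1+γ)) * (i:ℝ)⌋₊ with hEdef
  have hfloor : (i:ℝ)/(1+γ) - 1 < (E:ℝ) := by
    have h := Nat.sub_one_lt_floor ((1 - γ/(1+γ)) * (i:ℝ))
    rw [hEdef]
    have heq : (1 - γ/(1+γ)) * (i:ℝ) = (i:ℝ)/(1+γ) := by
      rw [h1ε]; ring
    linarith [heq ▸ h]
  have hgap : (1+(n:ℝ)) ≤ (i:ℝ)/(1+γ) - (i:ℝ)/(1+2*γ) := by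
    have heq : (i:ℝ)/(1+γ) - (i:ℝ)/(1+2*γ) = (i:ℝ)*γ/((1+γ)*(1+2*γ)) := by
      field_simp; ring
    rw [heq, le_div_iff₀ (by positivity)]
    rw [div_le_iff₀ hγ] at hiR
    nlinarith
  have hpos : (0:ℝ) < (i:ℝ)/(1+2*γ) := by positivity
  have hkeyE : (i:ℝ)/(1+2*γ) + (n:ℝ) < (E:ℝ) := by linarith
  have hEn : n < E := by exact_mod_cast (by linarith : (n:ℝ) < (E:ℝ))
  refine ⟨hEn, ?_⟩
  have hEnpos : (0:ℝ) < (E:ℝ) - (n:ℝ) := by linarith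
  set e := (i:ℝ)/((E:ℝ) - (n:ℝ)) with hedef
  have he : e < 1 + 2*γ := by
    have h4 : (i:ℝ)/(1+2*γ) < (E:ℝ)-(n:ℝ) := by linarith
    rw [div_lt_iff₀ (by positivity : (0:ℝ) < 1+2*γ)] at h4
    rw [hedef, div_lt_iff₀ hEnpos]
    nlinarith
  have hexp : 1/(M:ℝ) + e < α := by
    have : α = 1 + 4*γ := by rw [hγdef]; ring
    linarith
  have hαval : lg ^ α = 2/π := by
    rw [Real.rpow_def_of_pos hlg0, hαdef, mul_comm,
      div_mul_cancel₀ _ (ne_of_lt hloglg), Real.exp_log h2π]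
  have hkey2 : 2/π < lg ^ (1/(M:ℝ)) * lg ^ e := by
    rw [← Real.rpow_add hlg0]
    calc 2/π = lg ^ α := hαval.symm
      _ < lg ^ (1/(M:ℝ) + e) := Real.rpow_lt_rpow_of_exponent_gt hlg0 h2 hexp
  have hA : (0:ℝ) < lg ^ (1/(M:ℝ)) := Real.rpow_pos_of_pos hlg0 _
  have hB : (0:ℝ) < lg ^ e := Real.rpow_pos_of_pos hlg0 _
  have hden : (0:ℝ) < lg ^ e * (π/2) := by positivity
  rw [div_lt_one hden]
  calc (∑' k, f k) ≤ lg ^ (-(1/(M:ℝ))) := hS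
    _ < lg ^ e * (π/2) := by
        rw [Real.rpow_neg hlg0.le, inv_eq_one_div, div_lt_iff₀ hA]
        have hmul := mul_lt_mul_of_pos_right hkey2 (by positivity : (0:ℝ) < π/2)
        have hone : 2/π*(π/2) = 1 := by field_simp
        nlinarith [hmul, hone]
end
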